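/- arXiv:1307.6159 — 5 statements merged into one kernel-verified Lean document; each statement's English description precedes it below -/
import Mathlib

section
/- Let α ∈ (1/2, 1). There exists a constant C₁ > 0 such that for all t₁ < t₂: ∫_{ℝ²} (|e^{i(t₂−t₁)(x+y)} − 1|² / |x + y|²) · |x|^{−α} |y|^{−α} dx dy ≤ C₁ |t₂ − t₁|^{2α}. -/
open MeasureTheory Complex

/-- the key integral estimate giving Hölder continuity of order `α`. -/
theorem stmt7 (α : ℝ) (hα : α ∈ Set.Ioo (1/2 : ℝ) 1) :
    ∃ C₁ : ℝ, 0 < C₁ ∧ ∀ t₁ t₂ : ℝ, t₁ < t₂ →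
      ∫ p : ℝ × ℝ,
          ‖Complex.exp (Complex.I * (t₂ - t₁) * (p.1 + p.2)) - 1‖ ^ 2 / |p.1 + p.2| ^ 2
            * |p.1| ^ (-α) * |p.2| ^ (-α)
        ≤ C₁ * (t₂ - t₁) ^ (2 * α) := by
  set f : ℝ × ℝ → ℝ := fun p =>
    ‖Complex.exp (Complex.I * ((p.1 : ℂ) + (p.2 : ℂ))) - 1‖ ^ 2 / |p.1 + p.2| ^ 2
      * |p.1| ^ (-α) * |p.2| ^ (-α) with hf
  have hInonneg : 0 ≤ ∫ p, f p :=
    integral_nonneg fun p => by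
      have h1 : (0:ℝ) ≤ ‖Complex.exp (Complex.I * ((p.1 : ℂ) + (p.2 : ℂ))) - 1‖ ^ 2 / |p.1 + p.2| ^ 2 :=
        div_nonneg (by positivity) (by positivity)
      have h2 : (0:ℝ) ≤ |p.1| ^ (-α) := Real.rpow_nonneg (abs_nonneg _) _
      have h3 : (0:ℝ) ≤ |p.2| ^ (-α) := Real.rpow_nonneg (abs_nonneg _) _
      exact mul_nonneg (mul_nonneg h1 h2) h3
  refine ⟨(∫ p, f p) + 1, by linarith, ?_⟩
  intro t₁ t₂ ht
  set θ : ℝ := t₂ - t₁ with hθ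
  have hθpos : 0 < θ := by simp [hθ]; linarith
  have key : ∀ p : ℝ × ℝ,
      ‖Complex.exp (Complex.I * (θ : ℂ) * ((p.1 : ℂ) + (p.2 : ℂ))) - 1‖ ^ 2 / |p.1 + p.2| ^ 2
          * |p.1| ^ (-α) * |p.2| ^ (-α)
        = θ ^ (2*α) * (θ ^ (2:ℕ) * f (θ • p)) := by
    rintro ⟨x, y⟩
    simp only [hf, Prod.smul_fst, Prod.smul_snd, smul_eq_mul]
    have hax : |θ * x| ^ (-α) = θ ^ (-α) * |x| ^ (-α) := by
      rw [abs_mul, abs_of_pos hθpos, Real.mul_rpow hθpos.le (abs_nonneg x)]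
    have hay : |θ * y| ^ (-α) = θ ^ (-α) * |y| ^ (-α) := by
      rw [abs_mul, abs_of_pos hθpos, Real.mul_rpow hθpos.le (abs_nonneg y)]
    have hsum : |θ * x + θ * y| ^ 2 = θ ^ 2 * |x + y| ^ 2 := by
      rw [← mul_add, abs_mul, abs_of_pos hθpos, mul_pow]
    have hexp : Complex.I * ((↑(θ * x) : ℂ) + (↑(θ * y) : ℂ))
        = Complex.I * (θ : ℂ) * ((x : ℂ) + (y : ℂ)) := by push_cast; ring
    rw [hax, hay, hsum, hexp]
    set A : ℝ := ‖Complex.exp (Complex.I * (θ : ℂ) * ((x : ℂ) + (y : ℂ))) - 1‖ ^ 2 with hA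
    have hθ2 : (θ:ℝ) ^ (2:ℕ) ≠ 0 := by positivity
    have hdiv : A / (θ ^ 2 * |x + y| ^ 2) = A / |x + y| ^ 2 / θ ^ 2 := by
      rw [div_div]; ring_nf
    rw [hdiv]
    have hpow : θ ^ (2*α) * θ ^ (-α) * θ ^ (-α) = 1 := by
      rw [← Real.rpow_add hθpos, ← Real.rpow_add hθpos,
        show 2*α + -α + -α = 0 by ring, Real.rpow_zero]
    have hc : θ ^ (2:ℕ) * (A / |x + y| ^ 2 / θ ^ (2:ℕ)) = A / |x + y| ^ 2 := by
      rw [mul_comm, div_mul_cancel₀ _ hθ2]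
    have hrearr : θ ^ (2*α) * (θ ^ (2:ℕ) *
        (A / |x + y| ^ 2 / θ ^ 2 * (θ ^ (-α) * |x| ^ (-α)) * (θ ^ (-α) * |y| ^ (-α))))
        = (θ ^ (2*α) * θ ^ (-α) * θ ^ (-α)) * (θ ^ (2:ℕ) * (A / |x + y| ^ 2 / θ ^ (2:ℕ)))
          * (|x| ^ (-α) * |y| ^ (-α)) := by ring
    rw [hrearr, hpow, hc, one_mul]
    ring
  have hcast : ((t₂ : ℂ) - (t₁ : ℂ)) = (θ : ℂ) := by rw [hθ]; push_cast; ring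
  simp only [hcast]
  calc ∫ p : ℝ × ℝ,
          ‖Complex.exp (Complex.I * (θ : ℂ) * ((p.1 : ℂ) + (p.2 : ℂ))) - 1‖ ^ 2 / |p.1 + p.2| ^ 2
            * |p.1| ^ (-α) * |p.2| ^ (-α)
      = ∫ p : ℝ × ℝ, θ ^ (2*α) * (θ ^ (2:ℕ) * f (θ • p)) := by
        exact integral_congr_ae (Filter.Eventually.of_forall key)
    _ = θ ^ (2*α) * (θ ^ (2:ℕ) * ∫ p : ℝ × ℝ, f (θ • p)) := by
        rw [MeasureTheory.integral_const_mul]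
        congr 1
        rw [MeasureTheory.integral_const_mul]
    _ = θ ^ (2*α) * (θ ^ (2:ℕ) * (|((θ ^ Module.finrank ℝ (ℝ × ℝ))⁻¹ : ℝ)| • ∫ p, f p)) := by
        rw [MeasureTheory.Measure.integral_comp_smul volume f θ]
    _ = θ ^ (2*α) * ∫ p, f p := by
        have : Module.finrank ℝ (ℝ × ℝ) = 2 := by simp
        rw [this, smul_eq_mul, abs_inv, abs_of_pos (by positivity : (0:ℝ) < θ ^ 2)]
        field_simp
    _ ≤ ((∫ p, f p) + 1) * θ ^ (2*α) := by
        have hθp : (0:ℝ) ≤ θ ^ (2*α) := Real.rpow_nonneg hθpos.le _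
        nlinarith
end

section
/- Let H ∈ (1/2, 1) and k ≥ 2. The integral J_k = ∫_{[s,t]^k} |x₁ − x₂|^{H−1} |x₂ − x₃|^{H−1} ⋯ |x_{k−1} − x_k|^{H−1} |x_k − x₁|^{H−1} dx₁ ⋯ dx_k is finite for every bounded interval [s,t], and there exists C(s,t) > 0 with J_k ≤ C(s,t)^k for all k ≥ 2. -/
/-!
Write `K u v = |u - v| ^ (H - 1)`. For a fixed first variable `u`, the circular integrand is the
weight of the chain `u → x₂ → ⋯ → x_k → u`, which can be integrated out one variable at a time
from its start. Each step costs at most `A = sup_y ∫ K y u du`, finite since `H - 1 > -1`. The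
last step joins the two ends of the chain: there `K y u * K u z ≤ K y u ^ 2 + K u z ^ 2`, and
`K ^ 2 = |u - v| ^ (2H - 2)` is still integrable because `H > 1/2`, giving a bound `B`. Hence
`J_k ≤ (t - s) * B * A ^ (k - 2)`.
-/

open MeasureTheory Set Function
open scoped ENNReal

/-- cyclic successor on `Fin k` -/
def cyc (k : ℕ) (hk : 0 < k) (j : Fin k) : Fin k :=
  ⟨(j.1 + 1) % k, Nat.mod_lt _ hk⟩

lemma cyc_eq_finRotate (k : ℕ) (hk : 0 < k) : cyc k hk = finRotate k := by
  obtain ⟨n, rfl⟩ : ∃ n, k = n + 1 := ⟨k - 1, by omega⟩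
  ext j
  simp [cyc, Fin.val_add]

section Kernel

variable {α : Type*} {K : α → α → ℝ≥0∞}

noncomputable def pathWeight (K : α → α → ℝ≥0∞) {n : ℕ} (x : Fin (n + 1) → α) : ℝ≥0∞ :=
  ∏ j : Fin n, K (x j.castSucc) (x j.succ)

noncomputable def chainWeight (K : α → α → ℝ≥0∞) (y z : α) {n : ℕ} (x : Fin (n + 1) → α) :
    ℝ≥0∞ :=
  K y (x 0) * pathWeight K x * K (x (Fin.last n)) z

lemma pathWeight_cons {n : ℕ} (u : α) (x : Fin (n + 1) → α) :
    pathWeight K (Fin.cons u x : Fin (n + 2) → α) = K u (x 0) * pathWeight K x := by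
  simp [pathWeight, Fin.prod_univ_succ]

lemma chainWeight_cons (y z u : α) {n : ℕ} (x : Fin (n + 1) → α) :
    chainWeight K y z (Fin.cons u x : Fin (n + 2) → α) = K y u * chainWeight K u z x := by
  simp only [chainWeight, pathWeight_cons, Fin.cons_zero, ← Fin.succ_last, Fin.cons_succ]
  ring

lemma chainWeight_fin_one (y z : α) (x : Fin 1 → α) :
    chainWeight K y z x = K y (x 0) * K (x 0) z := by
  simp [chainWeight, pathWeight, Fin.last]

lemma prod_finRotate_eq_chainWeight {n : ℕ} (x : Fin (n + 2) → α) :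
    ∏ j, K (x j) (x (finRotate (n + 2) j)) = chainWeight K (x 0) (x 0) (Fin.tail x) := by
  have hrot (i : Fin n) : i.castSucc.succ + 1 = i.succ.succ := by
    rw [Fin.succ_castSucc, Fin.coeSucc_eq_succ]
  rw [Fin.prod_univ_succ, Fin.prod_univ_castSucc]
  simp [chainWeight, pathWeight, Fin.tail, hrot, mul_assoc]

variable [MeasurableSpace α]

lemma measurable_chainWeight (hK : Measurable (uncurry K)) (y z : α) (n : ℕ) :
    Measurable (chainWeight K y z (n := n)) := by
  unfold chainWeight pathWeight
  fun_prop

variable {μ : Measure α} [SigmaFinite μ]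

lemma lintegral_pi_fin_succ {n : ℕ} {F : (Fin (n + 1) → α) → ℝ≥0∞} (hF : Measurable F) :
    ∫⁻ x, F x ∂Measure.pi (fun _ => μ)
      = ∫⁻ u, ∫⁻ x, F (Fin.cons u x) ∂Measure.pi (fun _ => μ) ∂μ := by
  have he := measurePreserving_piFinSuccAbove (fun _ : Fin (n + 1) => μ) 0
  rw [← he.symm.lintegral_comp hF, lintegral_prod _ (by fun_prop)]
  simp [MeasurableEquiv.piFinSuccAbove_symm_apply, Fin.insertNthEquiv, Fin.insertNth_zero']

variable {S : Set α} {A B : ℝ≥0∞}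

theorem lintegral_chainWeight_le (hK : Measurable (uncurry K)) (hS : ∀ᵐ u ∂μ, u ∈ S)
    (hA : ∀ y ∈ S, ∫⁻ u, K y u ∂μ ≤ A) (hB : ∀ y ∈ S, ∀ z ∈ S, ∫⁻ u, K y u * K u z ∂μ ≤ B)
    (n : ℕ) {y z : α} (hy : y ∈ S) (hz : z ∈ S) :
    ∫⁻ x, chainWeight K y z x ∂Measure.pi (fun _ : Fin (n + 1) => μ) ≤ A ^ n * B := by
  induction n generalizing y with
  | zero =>
    rw [lintegral_pi_fin_succ (measurable_chainWeight hK y z 0)]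
    simpa [chainWeight_fin_one] using hB y hy z hz
  | succ n ih =>
    rw [lintegral_pi_fin_succ (measurable_chainWeight hK y z _)]
    simp_rw [chainWeight_cons, lintegral_const_mul _ (measurable_chainWeight hK _ z n)]
    calc ∫⁻ u, K y u * ∫⁻ x, chainWeight K u z x ∂Measure.pi (fun _ => μ) ∂μ
        ≤ ∫⁻ u, K y u * (A ^ n * B) ∂μ := by
          refine lintegral_mono_ae (hS.mono fun u hu => ?_)
          gcongr
          exact ih hu
      _ = (∫⁻ u, K y u ∂μ) * (A ^ n * B) :=
          lintegral_mul_const _ (by fun_prop)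
      _ ≤ A ^ (n + 1) * B := by
          rw [pow_succ', mul_assoc]
          gcongr
          exact hA y hy

theorem lintegral_prod_finRotate_le (hK : Measurable (uncurry K)) (hS : ∀ᵐ u ∂μ, u ∈ S)
    (hA : ∀ y ∈ S, ∫⁻ u, K y u ∂μ ≤ A) (hB : ∀ y ∈ S, ∀ z ∈ S, ∫⁻ u, K y u * K u z ∂μ ≤ B)
    (n : ℕ) :
    ∫⁻ x, ∏ j, K (x j) (x (finRotate (n + 2) j)) ∂Measure.pi (fun _ => μ)
      ≤ μ univ * (A ^ n * B) := by
  rw [lintegral_pi_fin_succ (by fun_prop)]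
  simp_rw [prod_finRotate_eq_chainWeight, Fin.cons_zero, Fin.tail_cons]
  calc ∫⁻ u, ∫⁻ x, chainWeight K u u x ∂Measure.pi (fun _ => μ) ∂μ
      ≤ ∫⁻ _, A ^ n * B ∂μ :=
        lintegral_mono_ae (hS.mono fun u hu => lintegral_chainWeight_le hK hS hA hB n hu hu)
    _ = μ univ * (A ^ n * B) := by rw [lintegral_const, mul_comm]

end Kernel

lemma intervalIntegrable_abs_rpow {γ L : ℝ} (hγ : -1 < γ) (hL : 0 ≤ L) :
    IntervalIntegrable (fun x => |x| ^ γ) volume (-L) L := by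
  have hright : IntervalIntegrable (fun x => |x| ^ γ) volume 0 L := by
    refine (intervalIntegral.intervalIntegrable_rpow' hγ).congr fun x hx => ?_
    rw [uIoc_of_le hL] at hx
    simp [abs_of_pos hx.1]
  have hleft : IntervalIntegrable (fun x => |x| ^ γ) volume (-L) 0 := by
    simpa using ((IntervalIntegrable.iff_comp_neg).mp hright).symm
  exact hleft.trans hright

lemma integral_abs_rpow {γ L : ℝ} (hγ : -1 < γ) (hL : 0 ≤ L) :
    ∫ x in (-L)..L, |x| ^ γ = 2 * L ^ (γ + 1) / (γ + 1) := by
  have hright : ∫ x in (0 : ℝ)..L, |x| ^ γ = L ^ (γ + 1) / (γ + 1) := by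
    rw [intervalIntegral.integral_congr (g := fun x => x ^ γ), integral_rpow (.inl hγ),
      Real.zero_rpow (by linarith), sub_zero]
    intro x hx
    rw [uIcc_of_le hL] at hx
    simp [abs_of_nonneg hx.1]
  have hleft : ∫ x in (-L)..0, |x| ^ γ = L ^ (γ + 1) / (γ + 1) := by
    simpa [hright] using (intervalIntegral.integral_comp_neg (a := 0) (b := L) (|·| ^ γ)).symm
  have hint := intervalIntegrable_abs_rpow hγ hL
  rw [← intervalIntegral.integral_add_adjacent_intervals
    (b := 0) (hint.mono_set (uIcc_subset_uIcc_left (by simp [hL])))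
    (hint.mono_set (uIcc_subset_uIcc_right (by simp [hL]))), hleft, hright]
  ring

lemma setLIntegral_Icc_abs_sub_rpow_le {γ s t y : ℝ} (hγ : -1 < γ) (hy : y ∈ Icc s t) :
    ∫⁻ x in Icc s t, ENNReal.ofReal (|x - y| ^ γ)
      ≤ ENNReal.ofReal (2 * (t - s) ^ (γ + 1) / (γ + 1)) := by
  set L := t - s
  have hL : 0 ≤ L := by linarith [hy.1, hy.2]
  have hsub : Icc s t ⊆ Icc (y - L) (y + L) :=
    Icc_subset_Icc (by linarith [hy.2]) (by linarith [hy.1])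
  have hint : IntervalIntegrable (fun x => |x - y| ^ γ) volume (y - L) (y + L) := by
    simpa [sub_eq_add_neg, add_comm] using (intervalIntegrable_abs_rpow hγ hL).comp_sub_right y
  refine (lintegral_mono_set hsub).trans_eq ?_
  rw [← ofReal_integral_eq_lintegral_ofReal
    ((intervalIntegrable_iff_integrableOn_Icc_of_le (by linarith)).1 hint)
    (ae_of_all _ fun x => by positivity), integral_Icc_eq_integral_Ioc,
    ← intervalIntegral.integral_of_le (by linarith),
    intervalIntegral.integral_comp_sub_right (|·| ^ γ), sub_sub_cancel_left, add_sub_cancel_left,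
    integral_abs_rpow hγ hL]

lemma ENNReal.mul_le_sq_add_sq (a b : ℝ≥0∞) : a * b ≤ a ^ 2 + b ^ 2 := by
  rcases le_total a b with h | h
  · exact (mul_le_mul_left h b).trans (by rw [sq, sq]; exact le_add_self)
  · exact (mul_le_mul_right h a).trans (by rw [sq, sq]; exact le_self_add)

theorem exists_lintegral_prod_abs_sub_rpow_finRotate_le_pow {β : ℝ} (hβ : -1 / 2 < β)
    (s t : ℝ) :
    ∃ C : ℝ≥0∞, 1 ≤ C ∧ C ≠ ⊤ ∧ ∀ n : ℕ,
      ∫⁻ x in univ.pi fun _ => Icc s t,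
          ∏ j : Fin (n + 2), ENNReal.ofReal (|x j - x (finRotate (n + 2) j)| ^ β)
        ≤ C ^ (n + 2) := by
  set A := ENNReal.ofReal (2 * (t - s) ^ (β + 1) / (β + 1))
  set B := 2 * ENNReal.ofReal (2 * (t - s) ^ (2 * β + 1) / (2 * β + 1)) with hBdef
  have hA : ∀ y ∈ Icc s t, ∫⁻ u in Icc s t, ENNReal.ofReal (|y - u| ^ β) ≤ A := fun y hy => by
    simpa only [abs_sub_comm y] using setLIntegral_Icc_abs_sub_rpow_le (by linarith) hy
  have hB : ∀ y ∈ Icc s t, ∀ z ∈ Icc s t,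
      ∫⁻ u in Icc s t, ENNReal.ofReal (|y - u| ^ β) * ENNReal.ofReal (|u - z| ^ β) ≤ B := by
    intro y hy z hz
    have hsq (a : ℝ) : ENNReal.ofReal (|a| ^ β) ^ 2 = ENNReal.ofReal (|a| ^ (2 * β)) := by
      rw [← ENNReal.ofReal_pow (by positivity), ← Real.rpow_mul_natCast (abs_nonneg a), mul_comm]
      norm_num
    calc _ ≤ ∫⁻ u in Icc s t,
            (ENNReal.ofReal (|u - y| ^ (2 * β)) + ENNReal.ofReal (|u - z| ^ (2 * β))) := by
          refine lintegral_mono fun u => ?_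
          rw [← hsq, ← hsq, abs_sub_comm u y]
          exact ENNReal.mul_le_sq_add_sq _ _
      _ = (∫⁻ u in Icc s t, ENNReal.ofReal (|u - y| ^ (2 * β)))
            + ∫⁻ u in Icc s t, ENNReal.ofReal (|u - z| ^ (2 * β)) :=
          lintegral_add_left (by fun_prop) _
      _ ≤ B := by
          rw [hBdef, two_mul (ENNReal.ofReal _)]
          exact add_le_add (setLIntegral_Icc_abs_sub_rpow_le (by linarith) hy)
            (setLIntegral_Icc_abs_sub_rpow_le (by linarith) hz)
  have hcycle := lintegral_prod_finRotate_le (K := fun u v => ENNReal.ofReal (|u - v| ^ β))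
    (μ := volume.restrict (Icc s t)) (by fun_prop) (ae_restrict_mem measurableSet_Icc) hA hB
  set C := max 1 (max A (volume (Icc s t) * B))
  refine ⟨C, le_max_left _ _, by simp [C, A, B, ENNReal.mul_eq_top], fun n => ?_⟩
  rw [volume_pi, Measure.restrict_pi_pi]
  calc _ ≤ volume.restrict (Icc s t) univ * (A ^ n * B) := hcycle n
    _ = A ^ n * (volume (Icc s t) * B) := by rw [Measure.restrict_apply_univ]; ring
    _ ≤ C ^ n * C := by gcongr <;> simp [C]
    _ ≤ C ^ (n + 2) := by
      rw [← pow_succ]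
      exact pow_le_pow_right₀ (le_max_left _ _) (by omega)

/-- the circular integral `J_k` over `[s,t]^k` is finite and bounded by `C^k`. -/
theorem stmt8 (H : ℝ) (hH : H ∈ Set.Ioo (1/2 : ℝ) 1) (s t : ℝ) :
    (∀ k : ℕ, ∀ hk : 2 ≤ k,
      IntegrableOn
        (fun x : Fin k → ℝ =>
          ∏ j : Fin k, |x j - x (cyc k (by omega) j)| ^ (H - 1))
        (Set.univ.pi fun _ => Set.Icc s t) volume) ∧
    ∃ C : ℝ, 0 < C ∧ ∀ k : ℕ, ∀ hk : 2 ≤ k,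
      ∫ x : Fin k → ℝ in Set.univ.pi fun _ => Set.Icc s t,
          ∏ j : Fin k, |x j - x (cyc k (by omega) j)| ^ (H - 1)
        ≤ C ^ k := by
  obtain ⟨C, hC1, hCtop, hC⟩ :=
    exists_lintegral_prod_abs_sub_rpow_finRotate_le_pow (β := H - 1) (by linarith [hH.1]) s t
  have hlintegral (k : ℕ) (hk : 2 ≤ k) :
      ∫⁻ x in univ.pi fun _ => Icc s t,
          ENNReal.ofReal (∏ j : Fin k, |x j - x (cyc k (by omega) j)| ^ (H - 1)) ≤ C ^ k := by
    obtain ⟨n, rfl⟩ : ∃ n, k = n + 2 := ⟨k - 2, by omega⟩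
    simpa only [cyc_eq_finRotate,
      ENNReal.ofReal_prod_of_nonneg fun j _ => Real.rpow_nonneg (abs_nonneg _) _] using hC n
  have hmeas (k : ℕ) (hk : 2 ≤ k) :
      Measurable fun x : Fin k → ℝ => ∏ j, |x j - x (cyc k (by omega) j)| ^ (H - 1) := by
    fun_prop
  refine ⟨fun k hk => ⟨(hmeas k hk).aestronglyMeasurable, ?_⟩, C.toReal,
    ENNReal.toReal_pos (one_pos.trans_le hC1).ne' hCtop, fun k hk => ?_⟩
  · rw [hasFiniteIntegral_iff_ofReal (ae_of_all _ fun x => by positivity)]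
    exact (hlintegral k hk).trans_lt (ENNReal.pow_lt_top hCtop.lt_top)
  · rw [integral_eq_lintegral_of_nonneg_ae (ae_of_all _ fun x => by positivity)
      (hmeas k hk).aestronglyMeasurable, ← ENNReal.toReal_pow]
    exact ENNReal.toReal_mono (ENNReal.pow_ne_top hCtop) (hlintegral k hk)
end

section
/- Let n ≥ 2 and let 𝒢ₙ² be the set of Feynman graphs on n vertices, each vertex having two legs labeled 1 and 2, where legs are paired into links such that every link joins legs of two distinct vertices and every leg belongs to exactly one link. Let π ∈ 𝒫(n) be a partition of {1,…,n} all of whose blocks have size ≥ 2, say π = {B₁,…,B_k}. Then the number of graphs G ∈ 𝒢ₙ² whose connected components have vertex sets exactly B₁,…,B_k equals ∏_{j=1}^k 2^{#B_j − 1} (#B_j − 1)!. -/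
/-!
Every vertex has two legs, so the walk `σ = G ∘ legSwap` (enter a vertex, leave it by its other
leg) runs along the cycles of `G`. As `legSwap` conjugates `σ` to `σ⁻¹` and neither `G` nor
`legSwap` has fixed points, a parity argument shows that the two legs of a vertex never lie in the
same `σ`-orbit. Hence in a connected graph on `m` vertices the orbit of the leg `(v, 1)` visits
every vertex exactly once, and the graph is determined by the order in which the other `m - 1`
vertices are visited and the leg by which each of them is entered: `(m - 1)! 2 ^ (m - 1)` graphs.
A graph with components `π` is the same as a connected graph on every block of `π`.
-/

open Finset Function Equiv Relation
open scoped Nat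

namespace Equiv.Perm

variable {α : Type*}

theorem not_sameCycle_mul_apply_self {g s : Perm α} (hg : Involutive g) (hs : Involutive s)
    (hg' : ∀ y, g y ≠ y) (hs' : ∀ y, s y ≠ y) (x : α) : ¬ (g * s).SameCycle x (s x) := by
  set σ := g * s
  have hsσ : SemiconjBy s σ σ⁻¹ := Perm.ext fun y => by
    simp only [σ, Perm.mul_apply, eq_comm (a := s (g (s y))), Perm.inv_eq_iff_eq, hs (g (s y)),
      hg (s y)]
  have hconj (k : ℤ) (y : α) : s ((σ ^ k) y) = (σ ^ (-k)) (s y) := by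
    rw [← inv_zpow', ← Perm.mul_apply, (hsσ.zpow_right k).eq, Perm.mul_apply]
  rintro ⟨N, hN⟩
  obtain ⟨c, rfl | rfl⟩ := Int.even_or_odd' N
  · apply hs' ((σ ^ c) x)
    rw [hconj, ← hN, ← Perm.mul_apply, ← zpow_add]
    congr 2
    ring
  · -- the middle leg `z` of the orbit would be fixed by `g`
    set z := (σ ^ (c + 1)) x
    have hz : s z = (σ ^ c) x := by
      rw [hconj, ← hN, ← Perm.mul_apply, ← zpow_add]
      congr 2
      ring
    apply hg' z
    calc g z = g (s (s z)) := by rw [hs]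
      _ = σ ((σ ^ c) x) := by rw [hz]; rfl
      _ = z := by rw [← Perm.mul_apply, ← zpow_one_add, add_comm]

end Equiv.Perm

theorem Relation.ReflTransGen.exists_subtype {α : Type*} {r : α → α → Prop}
    {p : α → Prop} (hp : ∀ a b, p a → r a b → p b) {a b : α} (h : ReflTransGen r a b)
    (ha : p a) :
    ∃ hb : p b, ReflTransGen (fun x y : Subtype p => r x y) ⟨a, ha⟩ ⟨b, hb⟩ := by
  induction h with
  | refl => exact ⟨ha, .refl⟩
  | tail _ hbc ih =>
    obtain ⟨hb, h⟩ := ih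
    exact ⟨hp _ _ hb hbc, h.tail hbc⟩

namespace FeynmanGraph

variable {V : Type*}

def Adj (G : V × Fin 2 → V × Fin 2) (a b : V) : Prop := ∃ p q : Fin 2, G (a, p) = (b, q)

def ConnectedGraphs (V : Type*) :=
  {G : V × Fin 2 → V × Fin 2 //
    Involutive G ∧ (∀ l, (G l).1 ≠ l.1) ∧ ∀ i j, ReflTransGen (Adj G) i j}

def legSwap : Perm (V × Fin 2) := (Equiv.refl V).prodCongr Fin.revPerm

lemma legSwap_apply (l : V × Fin 2) : legSwap l = (l.1, l.2.rev) := rfl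

lemma legSwap_involutive : Involutive (legSwap : Perm (V × Fin 2)) := fun l => by
  simp [legSwap_apply]

lemma legSwap_ne (l : V × Fin 2) : legSwap l ≠ l := by
  obtain ⟨v, j⟩ := l
  have : j.rev ≠ j := by revert j; decide
  simpa [legSwap_apply] using this

lemma eq_or_eq_legSwap_of_fst_eq {l l' : V × Fin 2} (h : l'.1 = l.1) :
    l' = l ∨ l' = legSwap l := by
  obtain ⟨v, j⟩ := l
  obtain ⟨v', j'⟩ := l'
  obtain rfl : v' = v := h
  have : j' = j ∨ j' = j.rev := by revert j j'; decide
  simpa [legSwap_apply] using this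

def walk (G : V × Fin 2 → V × Fin 2) (hG : Involutive G) : Perm (V × Fin 2) :=
  hG.toPerm G * legSwap

@[simp]
lemma walk_apply {G : V × Fin 2 → V × Fin 2} (hG : Involutive G) (l : V × Fin 2) :
    walk G hG l = G (legSwap l) := rfl

section Walk

variable {G : V × Fin 2 → V × Fin 2} (hG : Involutive G)

lemma not_sameCycle_walk_legSwap (hloop : ∀ l, (G l).1 ≠ l.1) (l : V × Fin 2) :
    ¬ (walk G hG).SameCycle l (legSwap l) :=
  Perm.not_sameCycle_mul_apply_self hG legSwap_involutive
    (fun y h => hloop y (congrArg Prod.fst h)) legSwap_ne l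

lemma eq_of_sameCycle_walk_of_fst_eq (hloop : ∀ l, (G l).1 ≠ l.1) {l l' : V × Fin 2}
    (hc : (walk G hG).SameCycle l l') (h : l'.1 = l.1) : l' = l :=
  (eq_or_eq_legSwap_of_fst_eq h).resolve_right fun h' =>
    not_sameCycle_walk_legSwap hG hloop l (h' ▸ hc)

lemma exists_sameCycle_walk_fst_eq {l : V × Fin 2} {v : V}
    (hv : ReflTransGen (Adj G) l.1 v) : ∃ l', (walk G hG).SameCycle l l' ∧ l'.1 = v := by
  induction hv with
  | refl => exact ⟨l, .refl _ _, rfl⟩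
  | tail _ hadj ih =>
    obtain ⟨l', hl', rfl⟩ := ih
    obtain ⟨p, q, hpq⟩ := hadj
    rcases eq_or_eq_legSwap_of_fst_eq (l := l') (l' := (l'.1, p)) rfl with h | h
    · -- `G l'` sits on the vertex that the walk visits just before `l'`
      refine ⟨(walk G hG).symm l', Perm.sameCycle_symm_apply_right.2 hl', ?_⟩
      have : (walk G hG).symm l' = legSwap (G l') := by
        rw [Equiv.symm_apply_eq, walk_apply, legSwap_involutive, hG]
      rw [this, legSwap_apply, ← h, hpq]
    · exact ⟨walk G hG l', Perm.sameCycle_apply_right.2 hl', by rw [walk_apply, ← h, hpq]⟩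

lemma injOn_walk_iterate_fst (hloop : ∀ l, (G l).1 ≠ l.1) (l : V × Fin 2) :
    Set.InjOn (fun k => ((walk G hG)^[k] l).1) (Set.Iio (minimalPeriod (walk G hG) l)) :=
  fun _ ha _ hb h => iterate_injOn_Iio_minimalPeriod ha hb <|
    (eq_of_sameCycle_walk_of_fst_eq hG hloop
      (Perm.sameCycle_pow_left.2 (Perm.sameCycle_pow_right.2 (.refl _ _))) h.symm).symm

lemma exists_lt_minimalPeriod_walk_iterate_fst_eq [Finite V]
    (hconn : ∀ i j, ReflTransGen (Adj G) i j) (l : V × Fin 2) (v : V) :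
    ∃ k < minimalPeriod (walk G hG) l, ((walk G hG)^[k] l).1 = v := by
  obtain ⟨l', hl', rfl⟩ := exists_sameCycle_walk_fst_eq hG (hconn l.1 v)
  obtain ⟨k, rfl⟩ := hl'.exists_nat_pow_eq
  have hpos := minimalPeriod_pos_of_mem_periodicPts ((walk G hG).injective.mem_periodicPts l)
  exact ⟨k % _, Nat.mod_lt _ hpos, by rw [iterate_mod_minimalPeriod_eq]; rfl⟩

/-- A connected graph is a single cycle: the walk from any leg visits every vertex once. -/
theorem minimalPeriod_walk_eq_card [Fintype V] (hloop : ∀ l, (G l).1 ≠ l.1)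
    (hconn : ∀ i j, ReflTransGen (Adj G) i j) (l : V × Fin 2) :
    minimalPeriod (walk G hG) l = Fintype.card V := by
  have hbij : Bijective fun k : Fin (minimalPeriod (walk G hG) l) => ((walk G hG)^[k] l).1 :=
    ⟨fun a b h => Fin.ext (injOn_walk_iterate_fst hG hloop l a.2 b.2 h), fun v =>
      let ⟨k, hk, hv⟩ := exists_lt_minimalPeriod_walk_iterate_fst_eq hG hconn l v
      ⟨⟨k, hk⟩, hv⟩⟩
  simpa using Fintype.card_of_bijective hbij

end Walk

section CycleGraph

open Fin.NatCast

variable {n : ℕ} (e : Fin n ≃ V) (c : Fin n → Fin 2)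

lemma exists_eq_or_eq_legSwap (l : V × Fin 2) : ∃ k, l = (e k, c k) ∨ l = legSwap (e k, c k) :=
  ⟨e.symm l.1, eq_or_eq_legSwap_of_fst_eq (by simp)⟩

variable [NeZero n]

/-- The cycle through `e 0, e 1, …, e (n - 1)` whose walk enters `e k` by the leg `c k`. -/
def cycleGraph (l : V × Fin 2) : V × Fin 2 :=
  if l.2 = c (e.symm l.1) then legSwap (e (e.symm l.1 - 1), c (e.symm l.1 - 1))
  else (e (e.symm l.1 + 1), c (e.symm l.1 + 1))

@[simp]
lemma cycleGraph_apply_self (k : Fin n) :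
    cycleGraph e c (e k, c k) = legSwap (e (k - 1), c (k - 1)) := by
  simp [cycleGraph]

@[simp]
lemma cycleGraph_legSwap (k : Fin n) :
    cycleGraph e c (legSwap (e k, c k)) = (e (k + 1), c (k + 1)) := by
  have : (c k).rev ≠ c k := by simpa [legSwap_apply] using legSwap_ne (e k, c k)
  simp [cycleGraph, legSwap_apply, this]

lemma cycleGraph_involutive : Involutive (cycleGraph e c) := by
  intro l
  obtain ⟨k, rfl | rfl⟩ := exists_eq_or_eq_legSwap e c l
  · simp
  · simp [cycleGraph_legSwap]

lemma cycleGraph_fst_ne (hn : n ≠ 1) (l : V × Fin 2) : (cycleGraph e c l).1 ≠ l.1 := by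
  have h1 : (1 : Fin n) ≠ 0 := Fin.one_eq_zero_iff.not.2 hn
  obtain ⟨k, rfl | rfl⟩ := exists_eq_or_eq_legSwap e c l
  · rw [cycleGraph_apply_self]
    simpa [legSwap_apply, sub_eq_self] using h1
  · rw [cycleGraph_legSwap]
    simpa [legSwap_apply] using h1

lemma walk_cycleGraph_apply (k : Fin n) :
    walk (cycleGraph e c) (cycleGraph_involutive e c) (e k, c k) = (e (k + 1), c (k + 1)) :=
  cycleGraph_legSwap e c k

lemma walk_cycleGraph_iterate (j : ℕ) :
    (walk (cycleGraph e c) (cycleGraph_involutive e c))^[j] (e 0, c 0) =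
      (e (j : Fin n), c (j : Fin n)) := by
  induction j with
  | zero => simp
  | succ j ih => rw [iterate_succ_apply', ih, walk_cycleGraph_apply, Nat.cast_succ]

lemma cycleGraph_connected (i j : V) : ReflTransGen (Adj (cycleGraph e c)) i j := by
  have key (k : Fin n) (m : ℕ) :
      ReflTransGen (Adj (cycleGraph e c)) (e k) (e (k + (m : Fin n))) := by
    induction m with
    | zero => simpa using ReflTransGen.refl
    | succ m ih =>
      rw [Nat.cast_succ, ← add_assoc]
      exact ih.tail ⟨(c (k + m)).rev, c (k + m + 1), cycleGraph_legSwap e c (k + m)⟩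
  simpa using key (e.symm i) (e.symm j - e.symm i).val

lemma cycleGraph_eq {G : V × Fin 2 → V × Fin 2} (hG : Involutive G)
    (h : ∀ k, G (legSwap (e k, c k)) = (e (k + 1), c (k + 1))) : cycleGraph e c = G := by
  funext l
  obtain ⟨k, rfl | rfl⟩ := exists_eq_or_eq_legSwap e c l
  · rw [cycleGraph_apply_self, ← hG (legSwap _), h, sub_add_cancel]
  · rw [cycleGraph_legSwap, h]

end CycleGraph

/-- Cycle data normalised to start at `v`, entered by its leg `1`: this fixes the starting point
and the direction of the cycle. -/
def CycleData (n : ℕ) [NeZero n] (v : V) :=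
  {d : (Fin n ≃ V) × (Fin n → Fin 2) // d.1 0 = v ∧ d.2 0 = 1}

section CycleData

open Fin.NatCast

variable {n : ℕ} [NeZero n]

theorem cycleGraph_injective (v : V) :
    Injective fun d : CycleData n v => cycleGraph d.1.1 d.1.2 := by
  rintro ⟨⟨e, c⟩, (he : e 0 = v), (hc : c 0 = 1)⟩
    ⟨⟨e', c'⟩, (he' : e' 0 = v), (hc' : c' 0 = 1)⟩ (h : cycleGraph e c = cycleGraph e' c')
  have hwalk : walk _ (cycleGraph_involutive e c) = walk _ (cycleGraph_involutive e' c') :=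
    Perm.ext fun l => by simp [h]
  have hk (k : Fin n) : (e k, c k) = (e' k, c' k) := by
    rw [← Fin.cast_val_eq_self k, ← walk_cycleGraph_iterate, ← walk_cycleGraph_iterate, hwalk,
      he, hc, he', hc']
  exact Subtype.ext (Prod.ext (Equiv.ext fun k => congrArg Prod.fst (hk k))
    (funext fun k => congrArg Prod.snd (hk k)))

theorem exists_cycleGraph_eq [Fintype V] (hV : Fintype.card V = n) (v : V)
    (G : ConnectedGraphs V) : ∃ d : CycleData n v, cycleGraph d.1.1 d.1.2 = G.1 := by
  obtain ⟨G, hG, hloop, hconn⟩ := G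
  set σ := walk G hG
  have hp : minimalPeriod σ (v, 1) = n := (minimalPeriod_walk_eq_card hG hloop hconn _).trans hV
  have hmod (j : ℕ) : σ^[((j : Fin n) : ℕ)] (v, 1) = σ^[j] (v, 1) := by
    rw [Fin.val_natCast, ← hp, iterate_mod_minimalPeriod_eq]
  have hbij : Bijective fun k : Fin n => (σ^[k] (v, 1)).1 := by
    refine ⟨fun a b h => Fin.ext (injOn_walk_iterate_fst hG hloop _ (hp ▸ a.2) (hp ▸ b.2) h),
      fun w => ?_⟩
    obtain ⟨k, hk, hw⟩ := exists_lt_minimalPeriod_walk_iterate_fst_eq hG hconn (v, 1) w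
    exact ⟨⟨k, hp ▸ hk⟩, hw⟩
  refine ⟨⟨(Equiv.ofBijective _ hbij, fun k => (σ^[k] (v, 1)).2), by simp, by simp⟩,
    cycleGraph_eq _ _ hG fun k => ?_⟩
  have hk : k + 1 = ((k.val + 1 : ℕ) : Fin n) := by simp
  simp only [Equiv.ofBijective_apply, Prod.mk.eta]
  rw [hk, hmod, iterate_succ_apply']
  rfl

end CycleData

theorem card_cycleData [Fintype V] [DecidableEq V] {m : ℕ} (hV : Fintype.card V = m + 1)
    (v : V) : Nat.card (CycleData (m + 1) v) = m ! * 2 ^ m := by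
  rw [CycleData, Nat.card_congr (Equiv.subtypeProdEquivProd
    (p := fun e : Fin (m + 1) ≃ V => e 0 = v) (q := fun c : Fin (m + 1) → Fin 2 => c 0 = 1)),
    Nat.card_prod]
  congr 1
  · calc Nat.card {e : Fin (m + 1) ≃ V // e 0 = v}
        = Nat.card {e : Option (Fin m) ≃ V // e none = v} :=
          Nat.card_congr (Equiv.subtypeEquiv ((finSuccEquiv m).equivCongr (.refl V)) (by simp))
      _ = Nat.card (Fin m ≃ {w // w ≠ v}) := Nat.card_congr (Equiv.optionSubtype v)
      _ = m ! := by
          have : Fintype.card {w // w ≠ v} = m := by simp [Fintype.card_subtype_compl, hV]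
          rw [Nat.card_eq_fintype_card, Fintype.card_equiv (Fintype.equivFinOfCardEq this).symm,
            Fintype.card_fin]
  · calc Nat.card {c : Fin (m + 1) → Fin 2 // c 0 = 1}
        = Nat.card (Fin m → Fin 2) := Nat.card_congr
          { toFun c := Fin.tail c.1
            invFun t := ⟨Fin.cons 1 t, rfl⟩
            left_inv := fun ⟨c, hc⟩ => Subtype.ext <| by
              simp only; rw [← hc, Fin.cons_self_tail]
            right_inv t := Fin.tail_cons _ _ }
      _ = 2 ^ m := by simp

theorem card_connectedGraphs [Fintype V] [DecidableEq V] (hV : 2 ≤ Fintype.card V) :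
    Nat.card (ConnectedGraphs V) = 2 ^ (Fintype.card V - 1) * (Fintype.card V - 1)! := by
  obtain ⟨m, hm⟩ : ∃ m, Fintype.card V = m + 1 := ⟨Fintype.card V - 1, by omega⟩
  obtain ⟨v⟩ : Nonempty V := Fintype.card_pos_iff.1 (by omega)
  let toGraph (d : CycleData (m + 1) v) : ConnectedGraphs V :=
    ⟨cycleGraph d.1.1 d.1.2, cycleGraph_involutive _ _, cycleGraph_fst_ne _ _ (by omega),
      cycleGraph_connected _ _⟩
  have hbij : Bijective toGraph :=
    ⟨fun d d' h => cycleGraph_injective v (congrArg Subtype.val h), fun G =>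
      let ⟨d, hd⟩ := exists_cycleGraph_eq hm v G
      ⟨d, Subtype.ext hd⟩⟩
  rw [← Nat.card_eq_of_bijective toGraph hbij, card_cycleData hm, hm, Nat.add_sub_cancel,
    mul_comm]

section Restrict

def restrict (G : V × Fin 2 → V × Fin 2) (s : Finset V)
    (hs : ∀ l, l.1 ∈ s → (G l).1 ∈ s) (l : s × Fin 2) : s × Fin 2 :=
  (⟨(G (l.1, l.2)).1, hs _ l.1.2⟩, (G (l.1, l.2)).2)

variable {G : V × Fin 2 → V × Fin 2} {s : Finset V} (hs : ∀ l, l.1 ∈ s → (G l).1 ∈ s)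

lemma restrict_involutive (hG : Involutive G) : Involutive (restrict G s hs) := fun l => by
  simp [restrict, hG _]

lemma restrict_fst_ne (hloop : ∀ l, (G l).1 ≠ l.1) (l : s × Fin 2) :
    (restrict G s hs l).1 ≠ l.1 :=
  fun h => hloop _ (congrArg Subtype.val h)

lemma adj_restrict_of_adj {a b : s} (h : Adj G a b) : Adj (restrict G s hs) a b := by
  obtain ⟨p, q, hpq⟩ := h
  exact ⟨p, q, by simp [restrict, hpq]⟩

end Restrict

section Components

variable [Fintype V] [DecidableEq V] (π : Finpartition (univ : Finset V))

def GraphsWithComponents :=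
  {G : V × Fin 2 → V × Fin 2 // Involutive G ∧ (∀ l, (G l).1 ≠ l.1) ∧
    ∀ i j, ReflTransGen (Adj G) i j ↔ ∃ B ∈ π.parts, i ∈ B ∧ j ∈ B}

variable {π}

lemma GraphsWithComponents.fst_apply_mem (G : GraphsWithComponents π) {B : Finset V}
    (hB : B ∈ π.parts) (l : V × Fin 2) (hl : l.1 ∈ B) : (G.1 l).1 ∈ B := by
  obtain ⟨B', hB', hlB', hGlB'⟩ := (G.2.2.2 _ _).1 (.single ⟨l.2, (G.1 l).2, rfl⟩)
  rwa [π.eq_of_mem_parts hB hB' hl hlB']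

lemma GraphsWithComponents.restrict_connected (G : GraphsWithComponents π) {B : Finset V}
    (hB : B ∈ π.parts) (i j : B) :
    ReflTransGen (Adj (restrict G.1 B (G.fst_apply_mem hB))) i j := by
  have hclosed (a b : V) (ha : a ∈ B) (hab : Adj G.1 a b) : b ∈ B := by
    obtain ⟨p, q, hpq⟩ := hab
    simpa [hpq] using G.fst_apply_mem hB (a, p) ha
  obtain ⟨_, h⟩ := ((G.2.2.2 i j).2 ⟨B, hB, i.2, j.2⟩).exists_subtype hclosed i.2
  exact ReflTransGen.mono (fun _ _ => adj_restrict_of_adj _) _ _ h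

def glue (F : ∀ B : π.parts, ↥B.1 × Fin 2 → ↥B.1 × Fin 2)
    (l : V × Fin 2) : V × Fin 2 :=
  let B : π.parts := ⟨π.part l.1, π.part_mem.2 (mem_univ _)⟩
  let l' := F B (⟨l.1, π.mem_part (mem_univ _)⟩, l.2)
  (l'.1.1, l'.2)

variable (F : ∀ B : π.parts, ↥B.1 × Fin 2 → ↥B.1 × Fin 2)

lemma glue_apply (B : π.parts) (l : ↥B.1 × Fin 2) :
    glue F (l.1.1, l.2) = ((F B l).1.1, (F B l).2) := by
  obtain ⟨⟨a, ha⟩, p⟩ := l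
  obtain rfl : (⟨π.part a, π.part_mem.2 (mem_univ _)⟩ : π.parts) = B :=
    Subtype.ext (π.part_eq_of_mem B.2 ha)
  rfl

lemma glue_involutive (hF : ∀ B, Involutive (F B)) : Involutive (glue F) := fun ⟨a, p⟩ => by
  let B : π.parts := ⟨π.part a, π.part_mem.2 (mem_univ _)⟩
  have := glue_apply F B (⟨a, π.mem_part (mem_univ _)⟩, p)
  simp only at this
  rw [this, glue_apply F B, hF]

lemma glue_fst_ne (hF : ∀ B l, (F B l).1 ≠ l.1) (l : V × Fin 2) : (glue F l).1 ≠ l.1 := by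
  obtain ⟨a, p⟩ := l
  let B : π.parts := ⟨π.part a, π.part_mem.2 (mem_univ _)⟩
  have := glue_apply F B (⟨a, π.mem_part (mem_univ _)⟩, p)
  simp only at this
  rw [this]
  exact fun h => hF B _ (Subtype.ext h)

lemma glue_reflTransGen_iff (hF : ∀ B i j, ReflTransGen (Adj (F B)) i j) (i j : V) :
    ReflTransGen (Adj (glue F)) i j ↔ ∃ B ∈ π.parts, i ∈ B ∧ j ∈ B := by
  constructor
  · intro h
    have hclosed (a b : V) (ha : a ∈ π.part i) (hab : Adj (glue F) a b) : b ∈ π.part i := by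
      obtain ⟨p, q, hpq⟩ := hab
      let B : π.parts := ⟨π.part i, π.part_mem.2 (mem_univ _)⟩
      have := glue_apply F B (⟨a, ha⟩, p)
      simp only [hpq, Prod.mk.injEq] at this
      rw [this.1]
      exact (F B _).1.2
    exact π.mem_part_iff_exists.1 (h.exists_subtype hclosed (π.mem_part (mem_univ _))).1
      |>.imp fun B ⟨hB, hjB, hiB⟩ => ⟨hB, hiB, hjB⟩
  · rintro ⟨B, hB, hi, hj⟩
    refine ReflTransGen.lift Subtype.val (fun a b ⟨p, q, hpq⟩ => ⟨p, q, ?_⟩) _ _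
      (hF ⟨B, hB⟩ ⟨i, hi⟩ ⟨j, hj⟩)
    rw [glue_apply F ⟨B, hB⟩ (a, p), hpq]

def equivPiConnectedGraphs : GraphsWithComponents π ≃ ∀ B : π.parts, ConnectedGraphs B where
  toFun G B := ⟨restrict G.1 B (G.fst_apply_mem B.2), restrict_involutive _ G.2.1,
    restrict_fst_ne _ G.2.2.1, G.restrict_connected B.2⟩
  invFun F := ⟨glue fun B => (F B).1, glue_involutive _ fun B => (F B).2.1,
    glue_fst_ne _ fun B => (F B).2.2.1, glue_reflTransGen_iff _ fun B => (F B).2.2.2⟩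
  left_inv G := Subtype.ext <| funext fun ⟨a, p⟩ =>
    glue_apply (fun B => restrict G.1 B (G.fst_apply_mem B.2))
      ⟨π.part a, π.part_mem.2 (mem_univ _)⟩ (⟨a, π.mem_part (mem_univ _)⟩, p)
  right_inv F := funext fun B => Subtype.ext <| funext fun l => by
    have := glue_apply (fun B => (F B).1) B l
    simp only [restrict, this]

theorem card_graphsWithComponents (hπ : ∀ B ∈ π.parts, 2 ≤ B.card) :
    Nat.card (GraphsWithComponents π) = ∏ B ∈ π.parts, 2 ^ (B.card - 1) * (B.card - 1)! := by
  rw [Nat.card_congr equivPiConnectedGraphs, Nat.card_pi, ← prod_coe_sort π.parts]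
  refine prod_congr rfl fun B _ => ?_
  rw [card_connectedGraphs (by simpa using hπ B B.2), Fintype.card_coe]

end Components

end FeynmanGraph

theorem stmt12_general (n : ℕ)
    (π : Finpartition (Finset.univ : Finset (Fin n)))
    (hπ : ∀ B ∈ π.parts, 2 ≤ B.card) :
    Nat.card {G : (Fin n × Fin 2) → (Fin n × Fin 2) //
        Function.Involutive G ∧ (∀ l, (G l).1 ≠ l.1) ∧
        (∀ i j : Fin n,
          Relation.ReflTransGen (fun a b : Fin n => ∃ p q : Fin 2, G (a, p) = (b, q)) i j
            ↔ ∃ B ∈ π.parts, i ∈ B ∧ j ∈ B)}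
      = ∏ B ∈ π.parts, 2 ^ (B.card - 1) * Nat.factorial (B.card - 1) :=
  FeynmanGraph.card_graphsWithComponents hπ

/-- the number of Feynman graphs in `𝒢ₙ²` (perfect matchings of the `2n`
legs `(i,j)`, `i ∈ Fin n`, `j ∈ Fin 2`, joining legs of distinct vertices) whose
connected components on the vertex set are exactly the blocks of a given partition `π`
(all blocks of size `≥ 2`) equals `∏_{B ∈ π} 2^{#B−1}(#B−1)!`. -/
theorem stmt12 (n : ℕ) (hn : 2 ≤ n)
    (π : Finpartition (Finset.univ : Finset (Fin n)))
    (hπ : ∀ B ∈ π.parts, 2 ≤ B.card) :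
    Nat.card {G : (Fin n × Fin 2) → (Fin n × Fin 2) //
        Function.Involutive G ∧ (∀ l, (G l).1 ≠ l.1) ∧
        (∀ i j : Fin n,
          Relation.ReflTransGen (fun a b : Fin n => ∃ p q : Fin 2, G (a, p) = (b, q)) i j
            ↔ ∃ B ∈ π.parts, i ∈ B ∧ j ∈ B)}
      = ∏ B ∈ π.parts, 2 ^ (B.card - 1) * Nat.factorial (B.card - 1) :=
  stmt12_general n π hπ
end

section
/- Let α ∈ (1/2, 1) and choose γ > 0 with 1/2 + 4γ < α. Let ψ be a finite linear combination of indicators of bounded intervals and ψ̂ its Fourier transform. Then ∫_{ℝ⁴} |ψ̂(z + w)| |ψ̂(z′ + w′)| · h_γ(z, z′)² · (1/(1 + |z + w|^γ)) (1/(1 + |z′ + w′|^γ)) dz dz′ dw dw′ < ∞, where h_γ(z, z′) = (1 + |z + z′|^{1/2+γ})^{−1} ((1 + |z|^{1/2+γ})^{−1} + (1 + |z′|^{1/2+γ})^{−1}). -/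
/-!
A step function has `|ψ̂(x)| ≤ C / (1 + |x|)`, so `F(x) = |ψ̂(x)| / (1 + |x|^γ)`
is integrable on `ℝ`. With `s = 1/2 + γ > 1/2`, the function `G(t) = (1 + |t|^s)⁻²` is integrable
too, and `h_γ(z, z')² ≤ 2 G(z + z') (G z + G z')`, whence `h_γ²` is integrable on `ℝ²` after the
shear `(z, z') ↦ (z, z + z')`. The integrand is `h_γ(x)² F(x₁ + y₁) F(x₂ + y₂)` with `x = (z, z')`,
`y = (w, w')`, which is integrable on `ℝ² × ℝ²` by the shear `(x, y) ↦ (x, x + y)`.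
-/

open MeasureTheory

/-- the auxiliary function `h_γ`. -/
noncomputable def hgamma (γ z z' : ℝ) : ℝ :=
  (1 / (1 + |z + z'| ^ ((1:ℝ)/2 + γ))) *
    (1 / (1 + |z| ^ ((1:ℝ)/2 + γ)) + 1 / (1 + |z'| ^ ((1:ℝ)/2 + γ)))

section Fourier

open Complex

lemma norm_cexp_I_mul_mul (x z : ℝ) : ‖cexp (I * x * z)‖ = 1 := by
  rw [show I * x * z = ((x * z : ℝ) : ℂ) * I by push_cast; ring]
  exact norm_exp_ofReal_mul_I _

lemma norm_setIntegral_Ioc_cexp_le (p q x : ℝ) :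
    ‖∫ z in Set.Ioc p q, cexp (I * x * z)‖ ≤ (|q - p| + 2) / (1 + |x|) := by
  set J := ∫ z in Set.Ioc p q, cexp (I * x * z)
  have h_trivial : ‖J‖ ≤ |q - p| := by
    refine (norm_setIntegral_le_of_norm_le_const measure_Ioc_lt_top
      fun z _ => (norm_cexp_I_mul_mul x z).le).trans ?_
    rw [one_mul, Real.volume_real_Ioc]
    exact max_le (le_abs_self _) (abs_nonneg _)
  have h_oscillation : ‖J‖ * |x| ≤ 2 := by
    rcases le_or_gt q p with hqp | hpq
    · simp [J, Set.Ioc_eq_empty_of_le hqp]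
    rcases eq_or_ne x 0 with rfl | hx
    · simp
    have hIx : I * x ≠ 0 := mul_ne_zero I_ne_zero (ofReal_ne_zero.mpr hx)
    have hJ : J = (cexp (I * x * q) - cexp (I * x * p)) / (I * x) := by
      rw [← integral_exp_mul_complex hIx, intervalIntegral.integral_of_le hpq.le]
    have hnorm : ‖cexp (I * x * q) - cexp (I * x * p)‖ ≤ 2 := by
      refine (norm_sub_le _ _).trans ?_
      rw [norm_cexp_I_mul_mul, norm_cexp_I_mul_mul]
      norm_num
    rwa [hJ, norm_div, norm_mul, norm_I, one_mul, norm_real, Real.norm_eq_abs,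
      div_mul_cancel₀ _ (abs_ne_zero.mpr hx)]
  rw [le_div_iff₀ (by positivity)]
  linarith

lemma integral_cexp_mul_stepFunction {m : ℕ} {a p q : Fin m → ℝ} {ψ : ℝ → ℝ}
    (hψ : ∀ x : ℝ, ψ x = ∑ j, a j * Set.indicator (Set.Ioc (p j) (q j)) (fun _ => (1:ℝ)) x)
    (x : ℝ) :
    ∫ z : ℝ, cexp (I * x * z) * (ψ z : ℂ) =
      ∑ j, (a j : ℂ) * ∫ z in Set.Ioc (p j) (q j), cexp (I * x * z) := by
  have hsum : (fun z : ℝ => cexp (I * x * z) * (ψ z : ℂ)) = fun z =>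
      ∑ j, (Set.Ioc (p j) (q j)).indicator (fun z => (a j : ℂ) * cexp (I * x * z)) z := by
    funext z
    simp only [hψ, Complex.ofReal_sum, Complex.ofReal_mul, Finset.mul_sum]
    refine Finset.sum_congr rfl fun j _ => ?_
    by_cases hz : z ∈ Set.Ioc (p j) (q j) <;> simp [hz, mul_comm]
  rw [hsum, integral_finsetSum]
  · simp only [integral_indicator measurableSet_Ioc, integral_const_mul]
  · intro j _
    rw [integrable_indicator_iff measurableSet_Ioc]
    refine Measure.integrableOn_of_bounded (M := ‖(a j : ℂ)‖) measure_Ioc_lt_top.ne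
      (by fun_prop) (Filter.Eventually.of_forall fun z => ?_)
    rw [norm_mul, norm_cexp_I_mul_mul, mul_one]

lemma exists_norm_integral_cexp_mul_stepFunction_le {m : ℕ} {a p q : Fin m → ℝ} {ψ : ℝ → ℝ}
    (hψ : ∀ x : ℝ, ψ x = ∑ j, a j * Set.indicator (Set.Ioc (p j) (q j)) (fun _ => (1:ℝ)) x) :
    ∃ C : ℝ, ∀ x : ℝ, ‖∫ z : ℝ, cexp (I * x * z) * (ψ z : ℂ)‖ ≤ C / (1 + |x|) := by
  refine ⟨∑ j, |a j| * (|q j - p j| + 2), fun x => ?_⟩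
  rw [integral_cexp_mul_stepFunction hψ, Finset.sum_div]
  refine (norm_sum_le _ _).trans (Finset.sum_le_sum fun j _ => ?_)
  rw [norm_mul, norm_real, Real.norm_eq_abs, mul_div_assoc]
  exact mul_le_mul_of_nonneg_left (norm_setIntegral_Ioc_cexp_le _ _ _) (abs_nonneg _)

lemma measurable_integral_cexp_mul {ψ : ℝ → ℝ} (hψ : Measurable ψ) :
    Measurable fun x : ℝ => ∫ z : ℝ, cexp (I * x * z) * (ψ z : ℂ) :=
  (StronglyMeasurable.integral_prod_right'
    (f := fun v : ℝ × ℝ => cexp (I * v.1 * v.2) * (ψ v.2 : ℂ))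
    (by fun_prop : Measurable _).stronglyMeasurable).measurable

end Fourier

lemma continuous_one_div_one_add_abs_rpow {r : ℝ} (hr : 0 ≤ r) :
    Continuous fun t : ℝ => 1 / (1 + |t| ^ r) :=
  continuous_const.div (continuous_const.add (continuous_abs.rpow_const fun _ => Or.inr hr))
    fun t => by positivity

lemma one_add_abs_rpow_le {r : ℝ} (hr : 0 ≤ r) (t : ℝ) :
    (1 + |t|) ^ r ≤ 2 ^ r * (1 + |t| ^ r) := by
  have h2r : (1:ℝ) ≤ 2 ^ r := Real.one_le_rpow (by norm_num) hr
  have htr : 0 ≤ |t| ^ r := by positivity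
  rcases le_total |t| 1 with ht | ht
  · calc (1 + |t|) ^ r ≤ 2 ^ r := by gcongr; linarith
      _ ≤ 2 ^ r * (1 + |t| ^ r) := by nlinarith
  · calc (1 + |t|) ^ r ≤ (2 * |t|) ^ r := by gcongr; linarith
      _ = 2 ^ r * |t| ^ r := Real.mul_rpow (by norm_num) (abs_nonneg t)
      _ ≤ 2 ^ r * (1 + |t| ^ r) := by nlinarith

lemma one_div_one_add_abs_rpow_le {r : ℝ} (hr : 0 ≤ r) (t : ℝ) :
    1 / (1 + |t| ^ r) ≤ 2 ^ r * (1 + |t|) ^ (-r) := by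
  rw [Real.rpow_neg (by positivity), ← div_eq_mul_inv,
    div_le_div_iff₀ (by positivity) (by positivity), one_mul]
  exact one_add_abs_rpow_le hr t

lemma integrable_mul_one_div_one_add_abs_rpow {f : ℝ → ℝ} {C r s : ℝ} (hr : 0 ≤ r)
    (hrs : 1 < r + s) (hf : AEStronglyMeasurable f)
    (hfC : ∀ x, ‖f x‖ ≤ C * (1 + |x|) ^ (-s)) :
    Integrable fun x => f x * (1 / (1 + |x| ^ r)) := by
  have hdom : Integrable fun x : ℝ => C * 2 ^ r * (1 + |x|) ^ (-(r + s)) := by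
    refine Integrable.const_mul ?_ _
    simpa [Real.norm_eq_abs] using
      integrable_one_add_norm (E := ℝ) (μ := volume) (r := r + s) (by simpa using hrs)
  refine hdom.mono' (hf.mul (continuous_one_div_one_add_abs_rpow hr).aestronglyMeasurable)
    (Filter.Eventually.of_forall fun x => ?_)
  have hx : 0 < 1 + |x| := by positivity
  calc ‖f x * (1 / (1 + |x| ^ r))‖ = ‖f x‖ * (1 / (1 + |x| ^ r)) := by
        rw [norm_mul, Real.norm_of_nonneg (show 0 ≤ 1 / (1 + |x| ^ r) by positivity)]
    _ ≤ C * (1 + |x|) ^ (-s) * (2 ^ r * (1 + |x|) ^ (-r)) :=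
        mul_le_mul (hfC x) (one_div_one_add_abs_rpow_le hr x) (by positivity)
          ((norm_nonneg _).trans (hfC x))
    _ = C * 2 ^ r * (1 + |x|) ^ (-(r + s)) := by
        rw [neg_add, Real.rpow_add hx]; ring

lemma integrable_sq_one_div_one_add_abs_rpow {s : ℝ} (hs : 1 / 2 < s) :
    Integrable fun t : ℝ => (1 / (1 + |t| ^ s)) ^ 2 := by
  have hs0 : 0 ≤ s := by linarith
  have h := integrable_mul_one_div_one_add_abs_rpow (f := fun t => 1 / (1 + |t| ^ s)) hs0
    (by linarith) (continuous_one_div_one_add_abs_rpow hs0).aestronglyMeasurable fun t => by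
      rw [Real.norm_of_nonneg (by positivity)]
      exact one_div_one_add_abs_rpow_le hs0 t
  simpa only [sq] using h

lemma hgamma_sq_le (γ z z' : ℝ) :
    hgamma γ z z' ^ 2 ≤ 2 * ((1 / (1 + |z + z'| ^ ((1:ℝ)/2 + γ))) ^ 2 *
      ((1 / (1 + |z| ^ ((1:ℝ)/2 + γ))) ^ 2 + (1 / (1 + |z'| ^ ((1:ℝ)/2 + γ))) ^ 2)) := by
  rw [hgamma, mul_pow, mul_left_comm]
  exact mul_le_mul_of_nonneg_left add_sq_le (sq_nonneg _)

lemma MeasureTheory.Integrable.mul_comp_add {G : Type*} [MeasurableSpace G] [AddGroup G]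
    [MeasurableAdd₂ G] {μ ν : Measure G} [SFinite μ] [SFinite ν] [ν.IsAddLeftInvariant] {g h : G → ℝ}
    (hg : Integrable g μ) (hh : Integrable h ν) :
    Integrable (fun x : G × G => g x.1 * h (x.1 + x.2)) (μ.prod ν) :=
  (measurePreserving_prod_add μ ν).integrable_comp_of_integrable (hg.mul_prod hh)

lemma integrable_hgamma_sq {γ : ℝ} (hγ : 0 < γ) :
    Integrable fun x : ℝ × ℝ => hgamma γ x.1 x.2 ^ 2 := by
  set G : ℝ → ℝ := fun t => (1 / (1 + |t| ^ ((1:ℝ)/2 + γ))) ^ 2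
  have hG : Integrable G := integrable_sq_one_div_one_add_abs_rpow (by linarith)
  have hleft : Integrable (fun x : ℝ × ℝ => G x.1 * G (x.1 + x.2)) (volume.prod volume) :=
    hG.mul_comp_add hG
  have hright : Integrable (fun x : ℝ × ℝ => G x.2 * G (x.1 + x.2)) (volume.prod volume) := by
    simpa only [Function.comp_def, Prod.fst_swap, Prod.snd_swap, add_comm] using hleft.swap
  have hcont := continuous_one_div_one_add_abs_rpow (r := (1:ℝ)/2 + γ) (by linarith)
  have hmeas : AEStronglyMeasurable (fun x : ℝ × ℝ => hgamma γ x.1 x.2 ^ 2) :=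
    (((hcont.comp (by fun_prop)).mul ((hcont.comp continuous_fst).add
      (hcont.comp continuous_snd))).pow 2).aestronglyMeasurable
  rw [Measure.volume_eq_prod]
  refine ((hleft.add hright).const_mul 2).mono' hmeas (Filter.Eventually.of_forall fun x => ?_)
  rw [Real.norm_of_nonneg (sq_nonneg _)]
  simp only [Pi.add_apply, G]
  linarith [hgamma_sq_le γ x.1 x.2]

theorem stmt15_general (γ : ℝ) (hγ : 0 < γ)
    (m : ℕ) (a p q : Fin m → ℝ) (ψ : ℝ → ℝ)
    (hψ : ∀ x : ℝ, ψ x = ∑ j, a j * Set.indicator (Set.Ioc (p j) (q j)) (fun _ => (1:ℝ)) x)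
    (ψhat : ℝ → ℂ)
    (hψhat : ∀ x : ℝ, ψhat x = ∫ z : ℝ, Complex.exp (Complex.I * x * z) * (ψ z : ℂ)) :
    Integrable (fun v : ℝ × ℝ × ℝ × ℝ =>
      ‖ψhat (v.1 + v.2.2.1)‖ * ‖ψhat (v.2.1 + v.2.2.2)‖ *
        hgamma γ v.1 v.2.1 ^ 2 *
        (1 / (1 + |v.1 + v.2.2.1| ^ γ)) * (1 / (1 + |v.2.1 + v.2.2.2| ^ γ)))
      volume := by
  have hψhat_eq : ψhat = fun x : ℝ => ∫ z : ℝ, Complex.exp (Complex.I * x * z) * (ψ z : ℂ) :=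
    funext hψhat
  have hψ_meas : Measurable ψ := by
    rw [funext hψ]; fun_prop (disch := exact measurableSet_Ioc)
  obtain ⟨C, hC⟩ := exists_norm_integral_cexp_mul_stepFunction_le hψ
  set F : ℝ → ℝ := fun x => ‖ψhat x‖ * (1 / (1 + |x| ^ γ))
  have hF : Integrable F := by
    refine integrable_mul_one_div_one_add_abs_rpow (s := 1) (C := C) hγ.le (by linarith)
      (hψhat_eq ▸ (measurable_integral_cexp_mul hψ_meas).norm.aestronglyMeasurable) fun x => ?_
    rw [norm_norm, Real.rpow_neg_one, ← div_eq_mul_inv, hψhat_eq]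
    exact hC x
  have hprod : Integrable (fun v : (ℝ × ℝ) × (ℝ × ℝ) =>
      hgamma γ v.1.1 v.1.2 ^ 2 * (F (v.1 + v.2).1 * F (v.1 + v.2).2)) (volume.prod volume) :=
    (integrable_hgamma_sq hγ).mul_comp_add (hF.mul_prod hF)
  rw [← volume_preserving_prodAssoc.integrable_comp_emb
    MeasurableEquiv.prodAssoc.measurableEmbedding]
  refine hprod.congr (Filter.Eventually.of_forall fun v => ?_)
  simp only [F, Prod.fst_add, Prod.snd_add, Function.comp_apply, MeasurableEquiv.prodAssoc,
    MeasurableEquiv.coe_mk, Equiv.prodAssoc_apply]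
  ring

/-- integrability over `ℝ⁴` of
`|ψ̂(z+w)||ψ̂(z′+w′)| h_γ(z,z′)² (1+|z+w|^γ)⁻¹(1+|z′+w′|^γ)⁻¹`
for a step function `ψ`. -/
theorem stmt15 (α γ : ℝ) (hα : α ∈ Set.Ioo (1/2 : ℝ) 1) (hγ : 0 < γ)
    (hγα : 1/2 + 4 * γ < α)
    (m : ℕ) (a p q : Fin m → ℝ) (ψ : ℝ → ℝ)
    (hψ : ∀ x : ℝ, ψ x = ∑ j, a j * Set.indicator (Set.Ioc (p j) (q j)) (fun _ => (1:ℝ)) x)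
    (ψhat : ℝ → ℂ)
    (hψhat : ∀ x : ℝ, ψhat x = ∫ z : ℝ, Complex.exp (Complex.I * x * z) * (ψ z : ℂ)) :
    Integrable (fun v : ℝ × ℝ × ℝ × ℝ =>
      ‖ψhat (v.1 + v.2.2.1)‖ * ‖ψhat (v.2.1 + v.2.2.2)‖ *
        hgamma γ v.1 v.2.1 ^ 2 *
        (1 / (1 + |v.1 + v.2.2.1| ^ γ)) * (1 / (1 + |v.2.1 + v.2.2.2| ^ γ)))
      volume :=
  stmt15_general γ hγ m a p q ψ hψ ψhat hψhat
end

section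
/- Let α ∈ (0,1) and T > 0. Let ν_{s,u} denote the law of (ρ_s, ρ_u) for a standard symmetric α-stable Lévy process ρ on ℝ, so that its characteristic function satisfies |ν̂_{s,u}(z, z′)| = exp(−(s∧u)|z + z′|^α − |s − u| |z′ 1_{u>s} + z 1_{s>u}|^α) for s ≠ u. Then there exists C(T) > 0 such that for all z, z′ ∈ ℝ: ∫_0^T ∫_0^T |ν̂_{s,u}(z, z′)| ds du ≤ C(T) (1/(1 + |z + z′|^α)) (1/(1 + |z|^α) + 1/(1 + |z′|^α)). -/
/-! Off the diagonal, `|ν̂_{s,u}(z,z')|` equals `e^{-as-b(u-s)}` on `{s < u}` and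
`e^{-au-c(s-u)}` on `{u < s}`, where `a = |z+z'|^α`, `b = |z'|^α`, `c = |z|^α`. After exchanging
the order of integration in the second piece, both are integrated first over the time gap, which
costs `(T+1)/(1+b)` (resp. `(T+1)/(1+c)`) because `∫₀ᴸ e^{-xt} dt ≤ min(L, 1/x) ≤ (L+1)/(1+x)`,
and then over the earlier time, which costs `(T+1)/(1+a)`. -/

open MeasureTheory Set Real

theorem intervalIntegral_exp_neg_mul_le {x L : ℝ} (hx : 0 ≤ x) (hL : 0 ≤ L) :
    ∫ t in (0:ℝ)..L, rexp (-(x * t)) ≤ (L + 1) / (1 + x) := by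
  have h_le_length : ∫ t in (0:ℝ)..L, rexp (-(x * t)) ≤ L := by
    calc ∫ t in (0:ℝ)..L, rexp (-(x * t)) ≤ ∫ _ in (0:ℝ)..L, (1:ℝ) :=
          intervalIntegral.integral_mono_on hL
            ((by fun_prop : Continuous _).intervalIntegrable _ _) (by simp) fun t ht =>
            exp_le_one_iff.2 (by nlinarith [ht.1])
      _ = L := by simp
  have h_mul_le_one : x * ∫ t in (0:ℝ)..L, rexp (-(x * t)) ≤ 1 := by
    rw [intervalIntegral.mul_integral_comp_mul_left (f := fun v => rexp (-v)),
      intervalIntegral.integral_comp_neg (f := rexp), integral_exp]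
    simpa using (exp_pos _).le
  rw [le_div_iff₀ (by positivity)]
  linarith

theorem setIntegral_Ioc_exp_neg_mul_sub_le {x p q : ℝ} (hx : 0 ≤ x) (hpq : p ≤ q) :
    ∫ t in Ioc p q, rexp (-(x * (t - p))) ≤ (q - p + 1) / (1 + x) := by
  rw [← intervalIntegral.integral_of_le hpq, intervalIntegral.integral_comp_sub_right
    (fun t => rexp (-(x * t))), sub_self]
  exact intervalIntegral_exp_neg_mul_le hx (sub_nonneg.2 hpq)

noncomputable def oneSidedKernel (a b s u : ℝ) : ℝ :=
  if s < u then rexp (-(a * s) - b * (u - s)) else 0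

section oneSidedKernel

variable {a b T : ℝ}

theorem oneSidedKernel_nonneg (s u : ℝ) : 0 ≤ oneSidedKernel a b s u := by
  unfold oneSidedKernel; split_ifs <;> positivity

theorem oneSidedKernel_le_one (ha : 0 ≤ a) (hb : 0 ≤ b) {s : ℝ} (hs : 0 ≤ s) (u : ℝ) :
    oneSidedKernel a b s u ≤ 1 := by
  unfold oneSidedKernel
  split_ifs with hsu
  · exact exp_le_one_iff.2 (by nlinarith)
  · exact zero_le_one

theorem measurable_oneSidedKernel_uncurry :
    Measurable fun p : ℝ × ℝ => oneSidedKernel a b p.1 p.2 :=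
  Measurable.ite (measurableSet_lt measurable_fst measurable_snd) (by fun_prop) measurable_const

theorem integrable_oneSidedKernel_uncurry (ha : 0 ≤ a) (hb : 0 ≤ b) :
    Integrable (fun p : ℝ × ℝ => oneSidedKernel a b p.1 p.2)
      ((volume.restrict (Ioc 0 T)).prod (volume.restrict (Ioc 0 T))) := by
  rw [Measure.prod_restrict, ← IntegrableOn]
  refine Measure.integrableOn_of_bounded (M := 1) ?_
    measurable_oneSidedKernel_uncurry.aestronglyMeasurable ?_
  · simp [Measure.prod_prod, ENNReal.mul_eq_top]
  · filter_upwards [ae_restrict_mem (measurableSet_Ioc.prod measurableSet_Ioc)] with ⟨s, u⟩ hp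
    rw [Real.norm_of_nonneg (oneSidedKernel_nonneg _ _)]
    exact oneSidedKernel_le_one ha hb hp.1.1.le _

theorem setIntegral_oneSidedKernel_le (hb : 0 ≤ b) {s : ℝ} (hs₀ : 0 ≤ s) (hsT : s ≤ T) :
    ∫ u in Ioc 0 T, oneSidedKernel a b s u ≤ rexp (-(a * s)) * ((T + 1) / (1 + b)) := by
  have h_indicator : oneSidedKernel a b s =
      (Ioi s).indicator fun u => rexp (-(a * s)) * rexp (-(b * (u - s))) := by
    ext u
    simp only [oneSidedKernel, indicator_apply, mem_Ioi, ← exp_add]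
    ring_nf
  rw [h_indicator, setIntegral_indicator measurableSet_Ioi, Ioc_inter_Ioi, max_eq_right hs₀,
    integral_const_mul]
  gcongr
  exact (setIntegral_Ioc_exp_neg_mul_sub_le hb hsT).trans (by gcongr; linarith)

theorem integral_integral_oneSidedKernel_le (ha : 0 ≤ a) (hb : 0 ≤ b) (hT : 0 ≤ T) :
    ∫ s in Ioc 0 T, ∫ u in Ioc 0 T, oneSidedKernel a b s u
      ≤ (T + 1) / (1 + a) * ((T + 1) / (1 + b)) := by
  calc ∫ s in Ioc 0 T, ∫ u in Ioc 0 T, oneSidedKernel a b s u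
      ≤ ∫ s in Ioc 0 T, rexp (-(a * s)) * ((T + 1) / (1 + b)) := by
        refine setIntegral_mono_on ?_ (by fun_prop : Continuous _).integrableOn_Ioc
          measurableSet_Ioc fun s hs => setIntegral_oneSidedKernel_le hb hs.1.le hs.2
        exact (integrable_oneSidedKernel_uncurry ha hb).integral_prod_left
    _ = (∫ s in Ioc 0 T, rexp (-(a * (s - 0)))) * ((T + 1) / (1 + b)) := by
        simp [integral_mul_const]
    _ ≤ (T + 1) / (1 + a) * ((T + 1) / (1 + b)) := by
        gcongr
        simpa using setIntegral_Ioc_exp_neg_mul_sub_le ha hT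

end oneSidedKernel

theorem exp_neg_min_mul_sub_abs_mul_eq_oneSidedKernel_add {a b c s u : ℝ} (hsu : s ≠ u) :
    rexp (-(min s u) * a - |s - u| * (if s < u then b else c))
      = oneSidedKernel a b s u + oneSidedKernel a c u s := by
  rcases hsu.lt_or_gt with hlt | hgt
  · simp [oneSidedKernel, hlt, hlt.not_gt, min_eq_left hlt.le, abs_of_neg (sub_neg.2 hlt)]
    ring_nf
  · simp [oneSidedKernel, hgt, hgt.not_gt, min_eq_right hgt.le, abs_of_pos (sub_pos.2 hgt)]
    ring_nf

theorem stmt16_general (α : ℝ) (T : ℝ) (hT : 0 < T)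
    (ν : ℝ → ℝ → ℝ → ℝ → ℝ)
    (hν : ∀ s u z z' : ℝ, s ≠ u →
      ν s u z z' = Real.exp (-(min s u) * |z + z'| ^ α
        - |s - u| * |(if s < u then z' else z)| ^ α)) :
    ∃ C : ℝ, 0 < C ∧ ∀ z z' : ℝ,
      ∫ s in Set.Ioc (0:ℝ) T, ∫ u in Set.Ioc (0:ℝ) T, |ν s u z z'|
        ≤ C * (1 / (1 + |z + z'| ^ α)) * (1 / (1 + |z| ^ α) + 1 / (1 + |z'| ^ α)) := by
  refine ⟨(T + 1) ^ 2, by positivity, fun z z' => ?_⟩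
  set a := |z + z'| ^ α
  set b := |z'| ^ α
  set c := |z| ^ α
  have ha : 0 ≤ a := by positivity
  have hb : 0 ≤ b := by positivity
  have hc : 0 ≤ c := by positivity
  have hKb := integrable_oneSidedKernel_uncurry (T := T) ha hb
  have hKc : Integrable (fun p : ℝ × ℝ => oneSidedKernel a c p.2 p.1)
      ((volume.restrict (Ioc 0 T)).prod (volume.restrict (Ioc 0 T))) :=
    (integrable_oneSidedKernel_uncurry ha hc).swap
  have h_inner : ∀ᵐ s ∂volume.restrict (Ioc 0 T), ∫ u in Ioc 0 T, |ν s u z z'|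
      = (∫ u in Ioc 0 T, oneSidedKernel a b s u) + ∫ u in Ioc 0 T, oneSidedKernel a c u s := by
    filter_upwards [hKb.prod_right_ae, hKc.prod_right_ae] with s hKb_s hKc_s
    refine (integral_congr_ae ?_).trans (integral_add hKb_s hKc_s)
    filter_upwards [Measure.ae_ne _ s] with u hus
    rw [hν s u z z' hus.symm, abs_of_pos (exp_pos _), apply_ite (|·| ^ α)]
    exact exp_neg_min_mul_sub_abs_mul_eq_oneSidedKernel_add hus.symm
  calc ∫ s in Ioc 0 T, ∫ u in Ioc 0 T, |ν s u z z'|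
      = ∫ s in Ioc 0 T, ((∫ u in Ioc 0 T, oneSidedKernel a b s u)
          + ∫ u in Ioc 0 T, oneSidedKernel a c u s) := integral_congr_ae h_inner
    _ = (∫ s in Ioc 0 T, ∫ u in Ioc 0 T, oneSidedKernel a b s u)
          + ∫ u in Ioc 0 T, ∫ s in Ioc 0 T, oneSidedKernel a c u s := by
        rw [← integral_integral_swap (f := fun s u => oneSidedKernel a c u s) hKc]
        exact integral_add hKb.integral_prod_left hKc.integral_prod_left
    _ ≤ (T + 1) / (1 + a) * ((T + 1) / (1 + b)) + (T + 1) / (1 + a) * ((T + 1) / (1 + c)) :=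
        add_le_add (integral_integral_oneSidedKernel_le ha hb hT.le)
          (integral_integral_oneSidedKernel_le ha hc hT.le)
    _ = (T + 1) ^ 2 * (1 / (1 + a)) * (1 / (1 + c) + 1 / (1 + b)) := by
        field_simp
        ring

/-- bound on `∫₀ᵀ∫₀ᵀ |ν̂_{s,u}(z,z′)| ds du` where `ν_{s,u}` is the law of
`(ρ_s, ρ_u)` for a standard symmetric `α`-stable process, so that
`|ν̂_{s,u}(z,z′)| = exp(−(s∧u)|z+z′|^α − |s−u||z′1_{u>s} + z1_{s>u}|^α)`. -/
theorem stmt16 (α : ℝ) (hα : α ∈ Set.Ioo (0:ℝ) 1) (T : ℝ) (hT : 0 < T)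
    (ν : ℝ → ℝ → ℝ → ℝ → ℝ)
    (hν : ∀ s u z z' : ℝ, s ≠ u →
      ν s u z z' = Real.exp (-(min s u) * |z + z'| ^ α
        - |s - u| * |(if s < u then z' else z)| ^ α)) :
    ∃ C : ℝ, 0 < C ∧ ∀ z z' : ℝ,
      ∫ s in Set.Ioc (0:ℝ) T, ∫ u in Set.Ioc (0:ℝ) T, |ν s u z z'|
        ≤ C * (1 / (1 + |z + z'| ^ α)) * (1 / (1 + |z| ^ α) + 1 / (1 + |z'| ^ α)) :=
  stmt16_general α T hT ν hν
end
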